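/- arXiv:1709.10158 — 3 statements merged into one kernel-verified Lean document; each statement's English description precedes it below -/
import Mathlib

section
/- Let W be a ℂ-vector space and φ an invertible ℂ-linear endomorphism of W such that g(φ) = 0 for some nonzero polynomial g ∈ ℂ[X]. Then there exists a unique pair (T_s, T_u) of ℂ-linear endomorphisms of W such that: T_s ∘ T_u = T_u ∘ T_s = φ; T_s is semisimple (every T_s-invariant subspace of W has a T_s-invariant complement); and T_u is unipotent (T_u − id_W is nilpotent). Moreover T_s and T_u are invertible and can be taken to be polynomial expressions in φ. (This is the Jordan–Chevalley decomposition of φ.) -/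
/-!
Since `φ` is algebraic, the additive Jordan–Chevalley decomposition `φ = n + s` holds on all of `W`,
with `n` nilpotent, `s` semisimple, both polynomials in `φ`. As `n` commutes with the unit `φ`, `s`
is a unit; its inverse is a polynomial in `s` (left multiplication by `s` on the finite-dimensional
algebra `ℂ[s]` is injective, hence surjective), and `u = s⁻¹φ = 1 + s⁻¹n` is unipotent.
For uniqueness, another factorization `φ = s₁u₁` yields a semisimple `s₁` commuting with `s` such
that `s - s₁` is nilpotent. Since `s` and `s - s₁` are algebraic, every vector lies in a
finite-dimensional subspace invariant under both, where `s - s₁` is semisimple and nilpotent,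
hence zero.
-/

open Polynomial

section

open Algebra

theorem IsIntegral.ring_inverse_mem_adjoin {K A : Type*} [Field K] [Ring A] [Algebra K A] {x : A}
    (hx : IsIntegral K x) : Ring.inverse x ∈ adjoin K {x} := by
  by_cases hu : IsUnit x
  swap
  · rw [Ring.inverse_non_unit x hu]; exact zero_mem _
  have : FiniteDimensional K (adjoin K {x}) := .of_fg hx.fg_adjoin_singleton
  have hsurj : Function.Surjective
      (LinearMap.mulLeft K (⟨x, self_mem_adjoin_singleton K x⟩ : adjoin K {x})) :=
    LinearMap.injective_iff_surjective.mp fun y z h ↦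
      Subtype.ext (hu.mul_left_cancel (congrArg Subtype.val h))
  obtain ⟨⟨y, hy⟩, hxy⟩ := hsurj 1
  have hxy : x * y = 1 := congrArg Subtype.val hxy
  rwa [← mul_one (Ring.inverse x), ← hxy, Ring.inverse_mul_cancel_left x y hu]

theorem IsNilpotent.isIntegral {R A : Type*} [CommRing R] [Ring A] [Algebra R A] {x : A}
    (hx : IsNilpotent x) : IsIntegral R x := by
  obtain ⟨k, hk⟩ := hx
  exact ⟨X ^ k, monic_X_pow k, by simp [hk]⟩

theorem Commute.isNilpotent_mul_sub_self {R : Type*} [Ring R] {a b : R} (h : Commute a b)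
    (hb : IsNilpotent (b - 1)) : IsNilpotent (a * b - a) := by
  rw [← mul_sub_one]
  exact (h.sub_right (Commute.one_right a)).isNilpotent_mul_left hb

namespace Module.End

variable {K M : Type*} [Field K] [AddCommGroup M] [Module K M]

theorem isSemisimple_iff_forall_exists_isCompl {f : End K M} :
    f.IsSemisimple ↔ ∀ U : Submodule K M, (∀ x ∈ U, f x ∈ U) →
      ∃ V : Submodule K M, IsCompl U V ∧ ∀ x ∈ V, f x ∈ V := by
  simp only [isSemisimple_iff, mem_invtSubmodule_iff_forall_mem_of_mem, and_comm]

theorem exists_mem_finiteDimensional_invtSubmodule {a b : End K M} (ha : IsIntegral K a)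
    (hb : IsIntegral K b) (hab : Commute a b) (v : M) :
    ∃ U : Submodule K M, v ∈ U ∧ FiniteDimensional K U ∧
      U ∈ a.invtSubmodule ∧ U ∈ b.invtSubmodule := by
  set P := Subalgebra.toSubmodule (adjoin K {a}) * Subalgebra.toSubmodule (adjoin K {b})
  have mul_mem_P : ∀ c, (∀ p ∈ adjoin K {a}, ∀ q ∈ adjoin K {b}, c * (p * q) ∈ P) →
      ∀ y ∈ P, c * y ∈ P := fun c hc y hy ↦
    Submodule.mul_induction_on hy hc fun y z hy hz ↦ by rw [mul_add]; exact add_mem hy hz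
  have invt_map : ∀ c, (∀ y ∈ P, c * y ∈ P) → P.map (LinearMap.applyₗ v) ∈ c.invtSubmodule := by
    rintro c hc - ⟨y, hy, rfl⟩
    exact ⟨c * y, hc y hy, rfl⟩
  refine ⟨P.map (LinearMap.applyₗ v), ⟨1, ?_, rfl⟩, ?_, invt_map a ?_, invt_map b ?_⟩
  · simpa using Submodule.mul_mem_mul ((Subalgebra.mem_toSubmodule _).mpr (one_mem (adjoin K {a})))
      ((Subalgebra.mem_toSubmodule _).mpr (one_mem (adjoin K {b})))
  · exact .of_fg ((ha.fg_adjoin_singleton.mul hb.fg_adjoin_singleton).map _)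
  · refine mul_mem_P a fun p hp q hq ↦ ?_
    rw [← mul_assoc]
    exact Submodule.mul_mem_mul (Subalgebra.mem_toSubmodule _ |>.mpr <|
      mul_mem (self_mem_adjoin_singleton K a) hp) hq
  · refine mul_mem_P b fun p hp q hq ↦ ?_
    rw [← mul_assoc, (commute_of_mem_adjoin_singleton_of_commute hp hab.symm).eq, mul_assoc]
    exact Submodule.mul_mem_mul hp (Subalgebra.mem_toSubmodule _ |>.mpr <|
      mul_mem (self_mem_adjoin_singleton K b) hq)

theorem IsSemisimple.eq_of_isNilpotent_sub [PerfectField K] {s t : End K M}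
    (hs : s.IsSemisimple) (ht : t.IsSemisimple) (hs_int : IsIntegral K s) (hst : Commute s t)
    (hn : IsNilpotent (s - t)) : s = t := by
  ext v
  obtain ⟨U, hvU, hU, hsU, hnU⟩ := exists_mem_finiteDimensional_invtSubmodule hs_int
    hn.isIntegral ((Commute.refl s).sub_right hst) v
  have htU : U ∈ t.invtSubmodule := (mem_invtSubmodule_iff_forall_mem_of_mem t).mpr fun x hx ↦ by
    simpa using U.sub_mem (show s x ∈ U from hsU hx) (show (s - t) x ∈ U from hnU hx)
  have hss : IsSemisimple ((s - t).restrict hnU) := by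
    rw [← LinearMap.restrict_sub hsU htU hnU]
    exact (hs.restrict hsU).sub_of_commute (LinearMap.restrict_commute hst hsU htU)
      (ht.restrict htU)
  have h0 := eq_zero_of_isNilpotent_isSemisimple (isNilpotent.restrict hnU hn) hss
  exact sub_eq_zero.mp (congrArg Subtype.val (LinearMap.congr_fun h0 ⟨v, hvU⟩))

theorem IsSemisimple.eq_of_isNilpotent_sub_of_mem_adjoin [PerfectField K] {f s t : End K M}
    (hf : IsIntegral K f) (hs_mem : s ∈ adjoin K {f}) (hs : s.IsSemisimple)
    (hfs : IsNilpotent (f - s)) (ht : t.IsSemisimple) (hft : Commute f t)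
    (hft' : IsNilpotent (f - t)) : s = t := by
  have hts : Commute t s := commute_of_mem_adjoin_singleton_of_commute hs_mem hft.symm
  have hfs_mem : f - s ∈ adjoin K {f} := sub_mem (self_mem_adjoin_singleton K f) hs_mem
  refine hs.eq_of_isNilpotent_sub ht (.of_mem_of_fg _ hf.fg_adjoin_singleton _ hs_mem) hts.symm ?_
  rw [← sub_sub_sub_cancel_left t s f]
  exact (commute_of_mem_adjoin_singleton_of_commute hfs_mem ((Commute.refl f).sub_left hft.symm)
    ).isNilpotent_sub hft' hfs

theorem exists_isNilpotent_isSemisimple_of_isIntegral [PerfectField K] {f : End K M}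
    (hf : IsIntegral K f) :
    ∃ n ∈ adjoin K {f}, ∃ s ∈ adjoin K {f}, IsNilpotent n ∧ s.IsSemisimple ∧ f = n + s := by
  obtain ⟨P, k, hP, -, hdvd⟩ := exists_squarefree_dvd_pow_of_ne_zero (minpoly.ne_zero hf)
  exact exists_isNilpotent_isSemisimple_of_separable_of_dvd_pow
    (PerfectField.separable_iff_squarefree.mpr hP) hdvd

theorem exists_isSemisimple_isNilpotent_sub_one_mul_eq [PerfectField K] {f : End K M}
    (hf : IsIntegral K f) (hf_unit : IsUnit f) :
    ∃ s ∈ adjoin K {f}, ∃ u ∈ adjoin K {f}, s.IsSemisimple ∧ IsNilpotent (u - 1) ∧ s * u = f := by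
  obtain ⟨n, hn_mem, s, hs_mem, hn, hs, hf_eq⟩ := exists_isNilpotent_isSemisimple_of_isIntegral hf
  have hnf : Commute n f := (commute_of_mem_adjoin_self hn_mem).symm
  have hs_unit : IsUnit s := by
    have hs_eq : s = f + -n := by rw [hf_eq]; abel
    exact hs_eq ▸ hn.neg.isUnit_add_left_of_commute hf_unit hnf.neg_left
  have hs_inv_mem : Ring.inverse s ∈ adjoin K {f} :=
    adjoin_le (Set.singleton_subset_iff.mpr hs_mem)
      (IsIntegral.of_mem_of_fg _ hf.fg_adjoin_singleton _ hs_mem).ring_inverse_mem_adjoin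
  refine ⟨s, hs_mem, Ring.inverse s * f, mul_mem hs_inv_mem (self_mem_adjoin_singleton K f), hs,
    ?_, Ring.mul_inverse_cancel_left s f hs_unit⟩
  have hu_sub : Ring.inverse s * f - 1 = Ring.inverse s * n := by
    rw [hf_eq, mul_add, Ring.inverse_mul_cancel s hs_unit, add_sub_cancel_right]
  rw [hu_sub]
  exact (commute_of_mem_adjoin_singleton_of_commute hs_inv_mem hnf).symm.isNilpotent_mul_left hn

end Module.End

end

open Module.End in
/-- **Jordan–Chevalley decomposition.**  If `φ` is an invertible endomorphism of a
ℂ-vector space `W` annihilated by a nonzero polynomial `g`, then there is a unique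
pair `(T_s, T_u)` of endomorphisms with `T_s * T_u = T_u * T_s = φ`, `T_s` semisimple
(every `T_s`-invariant subspace has a `T_s`-invariant complement) and `T_u` unipotent
(`T_u - id` nilpotent); moreover `T_s` and `T_u` are invertible and can be taken to be
polynomial expressions in `φ`. -/
theorem jordan_chevalley_decomposition {W : Type*} [AddCommGroup W] [Module ℂ W]
    (φ : Module.End ℂ W) (hφ : IsUnit φ) (g : ℂ[X]) (hg : g ≠ 0)
    (hgφ : Polynomial.aeval φ g = 0) :
    (∃! p : Module.End ℂ W × Module.End ℂ W,
        p.1 * p.2 = φ ∧ p.2 * p.1 = φ ∧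
        (∀ U : Submodule ℂ W, (∀ x ∈ U, p.1 x ∈ U) →
          ∃ V : Submodule ℂ W, IsCompl U V ∧ ∀ x ∈ V, p.1 x ∈ V) ∧
        IsNilpotent (p.2 - 1)) ∧
      ∃ Ts Tu : Module.End ℂ W,
        Ts * Tu = φ ∧ Tu * Ts = φ ∧
        (∀ U : Submodule ℂ W, (∀ x ∈ U, Ts x ∈ U) →
          ∃ V : Submodule ℂ W, IsCompl U V ∧ ∀ x ∈ V, Ts x ∈ V) ∧
        IsNilpotent (Tu - 1) ∧ IsUnit Ts ∧ IsUnit Tu ∧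
        (∃ ps : ℂ[X], Polynomial.aeval φ ps = Ts) ∧
        (∃ pu : ℂ[X], Polynomial.aeval φ pu = Tu) := by
  have hφ_int : IsIntegral ℂ φ := IsAlgebraic.isIntegral ⟨g, hg, hgφ⟩
  obtain ⟨s, hs_mem, u, hu_mem, hs, hu, hsu⟩ :=
    exists_isSemisimple_isNilpotent_sub_one_mul_eq hφ_int hφ
  have hcomm : Commute s u :=
    Algebra.commute_of_mem_adjoin_singleton_of_commute hu_mem
      (Algebra.commute_of_mem_adjoin_self hs_mem).symm
  have hus : u * s = φ := hcomm.eq ▸ hsu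
  have hs_compl := isSemisimple_iff_forall_exists_isCompl.mp hs
  have hunits := hcomm.isUnit_mul_iff.mp (hsu ▸ hφ)
  refine ⟨⟨(s, u), ⟨hsu, hus, hs_compl, hu⟩, ?_⟩, s, u, hsu, hus, hs_compl, hu, hunits.1,
    hunits.2, ?_, ?_⟩
  · rintro ⟨s₁, u₁⟩ ⟨h₁, h₁', hs₁, hu₁⟩
    dsimp only at h₁ h₁' hs₁ hu₁
    have hc₁ : Commute s₁ u₁ := h₁.trans h₁'.symm
    have hs₁s : s = s₁ := hs.eq_of_isNilpotent_sub_of_mem_adjoin hφ_int hs_mem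
      (hsu ▸ hcomm.isNilpotent_mul_sub_self hu) (isSemisimple_iff_forall_exists_isCompl.mpr hs₁)
      (h₁ ▸ (Commute.refl s₁).mul_left hc₁.symm) (h₁ ▸ hc₁.isNilpotent_mul_sub_self hu₁)
    subst hs₁s
    exact Prod.ext rfl (hunits.1.mul_left_cancel (h₁.trans hsu.symm))
  · rwa [Algebra.adjoin_singleton_eq_range_aeval] at hs_mem
  · rwa [Algebra.adjoin_singleton_eq_range_aeval] at hu_mem
end

section
/- Let W be a ℂ-vector space, φ a ℂ-linear endomorphism of W, and α ∈ ℂ such that φ − α•id_W is nilpotent. Let W_∞ = ⨁_{i∈ℕ} W (writing w·e_i for the element w placed in the i-th summand, with the convention e_{−1} = 0), and let φ_∞ be the unique ℂ-linear endomorphism of W_∞ with φ_∞(w·e_i) = ((φ − α)w)·e_i + w·e_{i−1}. Then: (a) φ_∞ is surjective; and (b) the ℂ-linear map W → W_∞ sending w to ∑_{i ≥ 0} (−1)^i ((φ − α)^i w)·e_i (a finite sum, by nilpotency) is injective with image exactly ker(φ_∞); in particular ker(φ_∞) ≅ W. -/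
/-!
Write `ψ = φ - α • 1`. On coordinates, `Φ x k = ψ (x k) + x (k + 1)`, i.e. `Φ = N + S` with `N`
applying `ψ` in every coordinate and `S` the backward shift. For the forward shift `T` we get
`Φ T = 1 + N T`; since `N` commutes with `T` and is nilpotent, `N T` is nilpotent, so `Φ T` is
invertible and `Φ` is surjective. A kernel element satisfies `x (k + 1) = -ψ (x k)`, hence
`x k = (-1) ^ k • ψ ^ k (x 0)`, and it is determined by `x 0`; as `ψ ^ n = 0` these are exactly
the finite sums `∑_{i < n} (-1) ^ i • ψ ^ i w · e_i`.
-/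

section

open Finsupp

variable {R W : Type*} [Ring R] [AddCommGroup W] [Module R W]

theorem Finsupp.mapRange.linearMap_pow {α : Type*} (ψ : Module.End R W) (n : ℕ) :
    (mapRange.linearMap ψ : Module.End R (α →₀ W)) ^ n = mapRange.linearMap (ψ ^ n) := by
  induction n with
  | zero => exact mapRange.linearMap_id.symm
  | succ n ih => rw [pow_succ, ih, pow_succ, Module.End.mul_eq_comp, Module.End.mul_eq_comp,
      mapRange.linearMap_comp]

theorem Module.End.neg_one_pow_smul_pow_succ_apply (ψ : Module.End R W) (w : W) (k : ℕ) :
    (-1 : R) ^ (k + 1) • (ψ ^ (k + 1)) w = -ψ ((-1 : R) ^ k • (ψ ^ k) w) := by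
  rw [pow_succ, pow_succ', Module.End.mul_apply, map_smul, mul_neg_one, neg_smul]

namespace InfiniteJordan

theorem apply_eq_map_add_apply_succ {ψ : Module.End R W} {Φ : Module.End R (ℕ →₀ W)}
    (h0 : ∀ w, Φ (single 0 w) = single 0 (ψ w))
    (hsucc : ∀ i w, Φ (single (i + 1) w) = single (i + 1) (ψ w) + single i w)
    (x : ℕ →₀ W) (k : ℕ) : Φ x k = ψ (x k) + x (k + 1) := by
  induction x using Finsupp.induction_linear generalizing k with
  | zero => simp
  | add x y hx hy => simp only [map_add, Finsupp.add_apply, hx, hy]; abel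
  | single i w =>
    rcases i with _ | i
    · rw [h0]
      rcases k with _ | k <;> simp
    · rw [hsucc]
      rcases k with _ | k <;> simp [single_apply, apply_ite ψ]

theorem surjective_of_apply_eq_map_add_apply_succ {ψ : Module.End R W} (hψ : IsNilpotent ψ)
    {Φ : Module.End R (ℕ →₀ W)} (hΦ : ∀ x k, Φ x k = ψ (x k) + x (k + 1)) :
    Function.Surjective Φ := by
  set N : Module.End R (ℕ →₀ W) := mapRange.linearMap ψ
  set T : Module.End R (ℕ →₀ W) := lmapDomain W R Nat.succ
  have hNT : Commute N T := LinearMap.ext fun x => by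
    simp [N, T, Module.End.mul_apply, mapDomain_mapRange]
  have hN : IsNilpotent N := by
    obtain ⟨n, hn⟩ := hψ
    exact ⟨n, by rw [Finsupp.mapRange.linearMap_pow, hn]; ext; simp⟩
  have hTsucc : ∀ x k, T x (k + 1) = x k := fun x => mapDomain_apply Nat.succ_injective x
  have hΦT : Φ * T = 1 + N * T := LinearMap.ext fun x => Finsupp.ext fun k => by
    simp only [Module.End.mul_apply, hΦ, hTsucc, LinearMap.add_apply, Module.End.one_apply,
      Finsupp.add_apply, N, mapRange.linearMap_apply, mapRange_apply, add_comm]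
  have hunit : IsUnit (Φ * T) := hΦT ▸ (hNT.isNilpotent_mul_right hN).isUnit_one_add
  exact Function.Surjective.of_comp (g := T) ((Module.End.isUnit_iff _).mp hunit).surjective

theorem forall_map_add_apply_succ_eq_zero_iff (ψ : Module.End R W) (x : ℕ → W) :
    (∀ k, ψ (x k) + x (k + 1) = 0) ↔ ∀ k, x k = (-1 : R) ^ k • (ψ ^ k) (x 0) := by
  refine ⟨fun h k => ?_, fun h k => ?_⟩
  · induction k with
    | zero => simp
    | succ k ih =>
      rw [Module.End.neg_one_pow_smul_pow_succ_apply, ← ih, eq_neg_iff_add_eq_zero, add_comm, h]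
  · rw [h k, h (k + 1), Module.End.neg_one_pow_smul_pow_succ_apply, add_neg_cancel]

theorem sum_single_neg_one_pow_smul_apply {ψ : Module.End R W} {n : ℕ} (hn : ψ ^ n = 0)
    (w : W) (k : ℕ) :
    (∑ i ∈ Finset.range n, single i ((-1 : R) ^ i • (ψ ^ i) w)) k = (-1 : R) ^ k • (ψ ^ k) w := by
  rw [finsetSum_apply, Finset.sum_eq_single k (fun i _ hik => single_eq_of_ne hik.symm)]
  · simp
  · intro hk
    rw [Finset.mem_range, not_lt] at hk
    simp [pow_eq_zero_of_le hk hn]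

theorem injective_sum_single_neg_one_pow_smul {ψ : Module.End R W} {n : ℕ} (hn : ψ ^ n = 0) :
    Function.Injective fun w : W => ∑ i ∈ Finset.range n, single i ((-1 : R) ^ i • (ψ ^ i) w) :=
  fun v w h => by simpa [sum_single_neg_one_pow_smul_apply hn] using DFunLike.congr_fun h 0

theorem range_sum_single_neg_one_pow_smul_eq_ker {ψ : Module.End R W} {n : ℕ} (hn : ψ ^ n = 0)
    {Φ : Module.End R (ℕ →₀ W)} (hΦ : ∀ x k, Φ x k = ψ (x k) + x (k + 1)) :
    Set.range (fun w : W => ∑ i ∈ Finset.range n, single i ((-1 : R) ^ i • (ψ ^ i) w)) =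
      LinearMap.ker Φ := by
  ext x
  simp only [Set.mem_range, SetLike.mem_coe, LinearMap.mem_ker, Finsupp.ext_iff, hΦ,
    coe_zero, Pi.zero_apply, sum_single_neg_one_pow_smul_apply hn,
    forall_map_add_apply_succ_eq_zero_iff]
  refine ⟨fun ⟨w, hw⟩ k => ?_, fun h => ⟨x 0, fun k => (h k).symm⟩⟩
  rw [← hw k, ← hw 0, pow_zero, pow_zero, one_smul, Module.End.one_apply]

end InfiniteJordan

end

/-- Let `φ` be an endomorphism of a ℂ-vector space `W` with `φ - α • id` nilpotent
(say `(φ - α • id)^n = 0`).  On `W_∞ = ⨁_{i ∈ ℕ} W` (realized as `ℕ →₀ W`, with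
`w·e_i = Finsupp.single i w`), let `Φ = φ_∞` be the linear endomorphism determined by
`φ_∞(w·e_i) = ((φ - α)w)·e_i + w·e_{i-1}` (with `e_{-1} = 0`).  Then `φ_∞` is
surjective, and `w ↦ ∑_{i} (-1)^i ((φ - α)^i w)·e_i` is an injective linear map
whose range is exactly `ker φ_∞`; in particular `ker φ_∞ ≅ W`. -/
theorem surjective_and_ker_of_infinite_jordan {W : Type*} [AddCommGroup W] [Module ℂ W]
    (φ : Module.End ℂ W) (α : ℂ) (n : ℕ) (hn : (φ - α • 1) ^ n = 0)
    (Φ : (ℕ →₀ W) →ₗ[ℂ] (ℕ →₀ W))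
    (hΦ0 : ∀ w : W, Φ (Finsupp.single 0 w) = Finsupp.single 0 ((φ - α • 1) w))
    (hΦ : ∀ (i : ℕ) (w : W),
      Φ (Finsupp.single (i + 1) w) =
        Finsupp.single (i + 1) ((φ - α • 1) w) + Finsupp.single i w) :
    Function.Surjective Φ ∧
      Function.Injective (fun w : W =>
        ∑ i ∈ Finset.range n, Finsupp.single i ((-1 : ℂ) ^ i • ((φ - α • 1) ^ i) w)) ∧
      Set.range (fun w : W =>
          ∑ i ∈ Finset.range n, Finsupp.single i ((-1 : ℂ) ^ i • ((φ - α • 1) ^ i) w)) =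
        (LinearMap.ker Φ : Set (ℕ →₀ W)) := by
  have hΦ_apply := InfiniteJordan.apply_eq_map_add_apply_succ hΦ0 hΦ
  exact ⟨InfiniteJordan.surjective_of_apply_eq_map_add_apply_succ ⟨n, hn⟩ hΦ_apply,
    InfiniteJordan.injective_sum_single_neg_one_pow_smul hn,
    InfiniteJordan.range_sum_single_neg_one_pow_smul_eq_ker hn hΦ_apply⟩
end

section
/- Let λ ∈ ℂ with λ ≠ 0 and let m ≥ 1. Let V = ℂ[X]/((X−λ)^m) and let μ_λ denote the (bijective) multiplication-by-X ℂ-linear endomorphism of V; similarly let μ_{λ⁻¹} denote multiplication by X on ℂ[X]/((X−λ⁻¹)^m). Then there is a ℂ-linear equivalence e : V* ≃ ℂ[X]/((X−λ⁻¹)^m) from the dual space V* = Hom_ℂ(V, ℂ) such that e ∘ (μ_λ)ᵗ = (μ_{λ⁻¹})⁻¹ ∘ e, where (μ_λ)ᵗ is the transpose of μ_λ acting on V*. In other words, the dual of the local system L_{(X−λ)^m} is isomorphic to L_{(X−λ⁻¹)^m}, with the induced action on the dual corresponding to the inverse of the monodromy of L_{(X−λ⁻¹)^m}. -/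
open Polynomial

/-!
`A = K[X]/((X - c)^m)` is a Frobenius algebra: the coefficient of `X^(m-1)` of the reduced
representative is a functional `ℓ` for which `(a, b) ↦ ℓ (a * b)` is nondegenerate, so
`b ↦ ℓ (b * ·)` identifies `A` with its dual and turns the transpose of multiplication by `X`
into multiplication by `X`. Since `X - c` is nilpotent in `A`, so is `X⁻¹ - c⁻¹`, hence
`X ↦ X⁻¹` defines an algebra isomorphism `A ≃ K[X]/((X - c⁻¹)^m)`, which turns multiplication
by `X` into multiplication by `X⁻¹`.
-/

theorem pow_sub_eq_zero_of_mul_eq_one {S : Type*} [CommRing S] {x y c d : S} {m : ℕ}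
    (hx : (x - c) ^ m = 0) (hxy : x * y = 1) (hcd : c * d = 1) : (y - d) ^ m = 0 := by
  have : y - d = -(d * y) * (x - c) := by linear_combination d * hxy - y * hcd
  rw [this, mul_pow, hx, mul_zero]

theorem nondegenerate_mul_compr₂ {R A : Type*} [CommRing R] [CommRing A] [Algebra R A]
    {ℓ : A →ₗ[R] R} (hℓ : ∀ c : A, c ≠ 0 → ∃ a, ℓ (a * c) ≠ 0) :
    ((LinearMap.mul R A).compr₂ ℓ).Nondegenerate := by
  have hsep : ((LinearMap.mul R A).compr₂ ℓ).SeparatingRight := fun c hc ↦ by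
    by_contra h
    obtain ⟨a, ha⟩ := hℓ c h
    exact ha (hc a)
  refine ⟨fun c hc ↦ hsep c fun a ↦ ?_, hsep⟩
  simpa [mul_comm] using hc a

theorem exists_linearEquiv_dual_mul {K A : Type*} [Field K] [CommRing A] [Algebra K A]
    [FiniteDimensional K A] {ℓ : A →ₗ[K] K} (hℓ : ∀ c : A, c ≠ 0 → ∃ a, ℓ (a * c) ≠ 0) :
    ∃ e : A ≃ₗ[K] Module.Dual K A, ∀ a b, e (a * b) = (LinearMap.mulLeft K a).dualMap (e b) :=
  ⟨LinearMap.BilinForm.toDual _ (nondegenerate_mul_compr₂ hℓ), fun a b ↦ by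
    ext x
    exact congrArg ℓ ((mul_assoc a b x).trans (mul_left_comm a b x))⟩

namespace AdjoinRoot

variable {R : Type*} [CommRing R] {g : R[X]}

/-- The last coordinate in the power basis `1, root g, …, root g ^ (natDegree g - 1)`. -/
noncomputable def topCoeff (hg : g.Monic) : AdjoinRoot g →ₗ[R] R :=
  lcoeff R (g.natDegree - 1) ∘ₗ modByMonicHom hg

theorem topCoeff_mk_of_degree_lt (hg : g.Monic) {p : R[X]} (hp : p.degree < g.degree) :
    topCoeff hg (mk g p) = p.coeff (g.natDegree - 1) := by
  nontriviality R
  rw [topCoeff, LinearMap.comp_apply, modByMonicHom_mk, (modByMonic_eq_self_iff hg).2 hp,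
    lcoeff_apply]

theorem exists_topCoeff_mul_ne_zero (hg : g.Monic) {c : AdjoinRoot g} (hc : c ≠ 0) :
    ∃ a, topCoeff hg (a * c) ≠ 0 := by
  obtain ⟨p, rfl⟩ := mk_surjective c
  set q := p %ₘ g
  have hcq : mk g q = mk g p := mk_leftInverse hg (mk g p)
  have hq : q ≠ 0 := fun h ↦ hc (by rw [← hcq, h, map_zero])
  have : Nontrivial R := nontrivial_iff.mp ⟨⟨q, 0, hq⟩⟩
  have hqg : q.natDegree < g.natDegree :=
    natDegree_lt_natDegree hq (degree_modByMonic_lt p hg)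
  -- shift the leading coefficient of `q` into degree `natDegree g - 1`
  set k := g.natDegree - 1 - q.natDegree
  have hk : q.natDegree + k = g.natDegree - 1 := by omega
  have hdeg : (X ^ k * q).degree < g.degree := by
    apply degree_lt_degree
    rw [natDegree_X_pow_mul (n := k) hq]
    omega
  refine ⟨mk g (X ^ k), ?_⟩
  rw [← hcq, ← map_mul, topCoeff_mk_of_degree_lt hg hdeg, ← hk, coeff_X_pow_mul]
  exact leadingCoeff_ne_zero.mpr hq

theorem root_sub_C_pow_eq_zero (c : R) (m : ℕ) :
    (root ((X - C c) ^ m) - algebraMap R _ c) ^ m = 0 := by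
  rw [← mk_X, algebraMap_eq, ← mk_C, ← map_sub, ← map_pow, mk_self]

theorem isUnit_root_X_sub_C_pow {c : R} (hc : IsUnit c) (m : ℕ) :
    IsUnit (root ((X - C c) ^ m)) := by
  simpa using IsNilpotent.isUnit_add_right_of_commute ⟨m, root_sub_C_pow_eq_zero c m⟩
    (hc.map (algebraMap R _)) (Commute.all _ _)

theorem root_mul_inverse_root {c : R} (hc : IsUnit c) (m : ℕ) :
    root ((X - C c) ^ m) * Ring.inverse (root ((X - C c) ^ m)) = 1 :=
  Ring.mul_inverse_cancel _ (isUnit_root_X_sub_C_pow hc m)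

variable {c d : R} (hcd : c * d = 1) (m : ℕ)

noncomputable def invRootHom :
    AdjoinRoot ((X - C c) ^ m) →ₐ[R] AdjoinRoot ((X - C d) ^ m) :=
  liftAlgHom _ (Algebra.ofId R _) (Ring.inverse (root _)) <| by
    change aeval _ ((X - C c) ^ m) = 0
    rw [map_pow, map_sub, aeval_X, aeval_C]
    refine pow_sub_eq_zero_of_mul_eq_one (root_sub_C_pow_eq_zero d m)
      (root_mul_inverse_root (.of_mul_eq_one_right c hcd) m) ?_
    rw [← map_mul, mul_comm, hcd, map_one]

theorem root_mul_invRootHom_root :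
    root ((X - C d) ^ m) * invRootHom hcd m (root _) = 1 := by
  rw [invRootHom, liftAlgHom_root]
  exact root_mul_inverse_root (.of_mul_eq_one_right c hcd) m

theorem invRootHom_comp_invRootHom (hdc : d * c = 1) :
    (invRootHom hdc m).comp (invRootHom hcd m) = AlgHom.id R _ := by
  refine algHom_ext (left_inv_eq_right_inv (root_mul_invRootHom_root hdc m) ?_).symm
  rw [AlgHom.comp_apply, ← map_mul, root_mul_invRootHom_root, map_one]

noncomputable def invRootEquiv :
    AdjoinRoot ((X - C c) ^ m) ≃ₐ[R] AdjoinRoot ((X - C d) ^ m) :=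
  have hdc : d * c = 1 := by rwa [mul_comm]
  .ofAlgHom (invRootHom hcd m) (invRootHom hdc m)
    (invRootHom_comp_invRootHom hdc m hcd) (invRootHom_comp_invRootHom hcd m hdc)

end AdjoinRoot

theorem AdjoinRoot.exists_dual_equiv_X_sub_C_pow {K : Type*} [Field K] {c d : K}
    (hcd : c * d = 1) (m : ℕ) :
    ∃ e : Module.Dual K (AdjoinRoot ((X - C c) ^ m)) ≃ₗ[K] AdjoinRoot ((X - C d) ^ m),
      ∀ f, root ((X - C d) ^ m) *
          e ((LinearMap.mulLeft K (root ((X - C c) ^ m : K[X]))).dualMap f) = e f := by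
  have hg : ((X - C c) ^ m).Monic := (monic_X_sub_C c).pow m
  have := (powerBasis' hg).finite
  obtain ⟨φ, hφ⟩ := exists_linearEquiv_dual_mul fun _ ↦ exists_topCoeff_mul_ne_zero hg
  refine ⟨φ.symm ≪≫ₗ (invRootEquiv hcd m).toLinearEquiv, fun f ↦ ?_⟩
  obtain ⟨b, rfl⟩ := φ.surjective f
  simp only [LinearEquiv.trans_apply, ← hφ, LinearEquiv.symm_apply_apply,
    AlgEquiv.toLinearEquiv_apply]
  rw [map_mul, ← mul_assoc, invRootEquiv, AlgEquiv.ofAlgHom_apply, root_mul_invRootHom_root,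
    one_mul]

theorem dual_of_jordan_local_system_general (lam : ℂ) (hlam : lam ≠ 0) (m : ℕ) :
    ∃ e : Module.Dual ℂ (ℂ[X] ⧸ Ideal.span {(X - C lam) ^ m}) ≃ₗ[ℂ]
        (ℂ[X] ⧸ Ideal.span {(X - C lam⁻¹) ^ m}),
      ∀ f : Module.Dual ℂ (ℂ[X] ⧸ Ideal.span {(X - C lam) ^ m}),
        Ideal.Quotient.mk (Ideal.span {(X - C lam⁻¹) ^ m}) X *
            e ((LinearMap.mulLeft ℂ
                (Ideal.Quotient.mk (Ideal.span {(X - C lam) ^ m}) X)).dualMap f) =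
          e f :=
  AdjoinRoot.exists_dual_equiv_X_sub_C_pow (mul_inv_cancel₀ hlam) m

/-- **Duality for the Jordan-block local systems on `ℂ*`.**  For `λ ≠ 0` and `m ≥ 1`,
the dual of `V = ℂ[X]/((X-λ)^m)` (with monodromy `μ_λ` = multiplication by `X`) is
isomorphic to `ℂ[X]/((X-λ⁻¹)^m)`, and under this isomorphism the transpose action
`(μ_λ)ᵗ` on the dual corresponds to the inverse of the monodromy `μ_{λ⁻¹}`: there is a
ℂ-linear equivalence `e` with `μ_{λ⁻¹} ∘ e ∘ (μ_λ)ᵗ = e`, i.e.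
`e ∘ (μ_λ)ᵗ = (μ_{λ⁻¹})⁻¹ ∘ e`. -/
theorem dual_of_jordan_local_system (lam : ℂ) (hlam : lam ≠ 0) (m : ℕ) (hm : 1 ≤ m) :
    ∃ e : Module.Dual ℂ (ℂ[X] ⧸ Ideal.span {(X - C lam) ^ m}) ≃ₗ[ℂ]
        (ℂ[X] ⧸ Ideal.span {(X - C lam⁻¹) ^ m}),
      ∀ f : Module.Dual ℂ (ℂ[X] ⧸ Ideal.span {(X - C lam) ^ m}),
        Ideal.Quotient.mk (Ideal.span {(X - C lam⁻¹) ^ m}) X *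
            e ((LinearMap.mulLeft ℂ
                (Ideal.Quotient.mk (Ideal.span {(X - C lam) ^ m}) X)).dualMap f) =
          e f :=
  dual_of_jordan_local_system_general lam hlam m
end
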